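/- arXiv:1703.04829 — 2 statements merged into one kernel-verified Lean document; each statement's English description precedes it below -/
import Mathlib

section
/- Let x, y, z ∈ ℂⁿ be vectors with x*x = y*y = z*z = 1, where x* denotes the conjugate transpose. Then √(1 − |x*y|²) ≤ √(1 − |x*z|²) + √(1 − |z*y|²). -/
/-!
Project `x` and `y` onto the orthogonal complement of `z`. The projections have squared norms
`1 - |⟪x, z⟫|²` and `1 - |⟪z, y⟫|²` and inner product `⟪x, y⟫ - ⟪x, z⟫ ⟪z, y⟫`, so Cauchy–Schwarz
gives `|⟪x, y⟫| ≥ |⟪x, z⟫| |⟪z, y⟫| - sin α sin β`, where `cos α = |⟪x, z⟫|`, `cos β = |⟪z, y⟫|`.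
That is, `cos γ ≥ cos (α + β)` for `cos γ = |⟪x, y⟫|`, which forces `sin γ ≤ sin α + sin β`.
-/

open scoped InnerProductSpace

theorem sqrt_one_sub_sq_le_add_of_mul_sub_le {a b c : ℝ} (ha₀ : 0 ≤ a) (ha₁ : a ≤ 1)
    (hb₀ : 0 ≤ b) (hb₁ : b ≤ 1)
    (h : a * b - √(1 - a ^ 2) * √(1 - b ^ 2) ≤ c) :
    √(1 - c ^ 2) ≤ √(1 - a ^ 2) + √(1 - b ^ 2) := by
  set s := √(1 - a ^ 2)
  set t := √(1 - b ^ 2)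
  have hs : s ^ 2 = 1 - a ^ 2 := Real.sq_sqrt (by nlinarith)
  have ht : t ^ 2 = 1 - b ^ 2 := Real.sq_sqrt (by nlinarith)
  have hs₀ : 0 ≤ s := Real.sqrt_nonneg _
  have ht₀ : 0 ≤ t := Real.sqrt_nonneg _
  rw [Real.sqrt_le_left (by positivity)]
  rcases le_or_gt (a * b) (s * t) with hab | hab
  · have hab_sq : a ^ 2 + b ^ 2 ≤ 1 := by
      nlinarith [mul_le_mul hab hab (by positivity) (by positivity)]
    nlinarith [mul_nonneg hs₀ ht₀]
  · -- For `a = cos α`, `s = sin α`, etc., this is `cos² (α + β) + sin² (α + β) = 1`.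
    have hunit : (a * b - s * t) ^ 2 + (a * t + b * s) ^ 2 = 1 := by
      linear_combination (b ^ 2 + t ^ 2) * hs + ht
    have hsin : a * t + b * s ≤ s + t := by nlinarith
    nlinarith [pow_le_pow_left₀ (by linarith) h 2, pow_le_pow_left₀ (by positivity) hsin 2]

section

variable {𝕜 E : Type*} [RCLike 𝕜] [SeminormedAddCommGroup E] [InnerProductSpace 𝕜 E]
  {z : E}

lemma norm_eq_one_of_inner_self_eq_one {v : E} (h : ⟪v, v⟫_𝕜 = 1) : ‖v‖ = 1 := by
  rw [inner_self_eq_norm_sq_to_K] at h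
  exact (pow_eq_one_iff_of_nonneg (norm_nonneg v) two_ne_zero).1 (by exact_mod_cast h)

lemma inner_sub_smul_sub_smul_of_norm_eq_one (hz : ‖z‖ = 1) (x y : E) :
    ⟪x - ⟪z, x⟫_𝕜 • z, y - ⟪z, y⟫_𝕜 • z⟫_𝕜 = ⟪x, y⟫_𝕜 - ⟪x, z⟫_𝕜 * ⟪z, y⟫_𝕜 := by
  have hzz : ⟪z, z⟫_𝕜 = 1 := by simp [inner_self_eq_norm_sq_to_K, hz]
  simp only [inner_sub_left, inner_sub_right, inner_smul_left, inner_smul_right, hzz,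
    inner_conj_symm]
  ring

lemma norm_sub_smul_sq_of_norm_eq_one (hz : ‖z‖ = 1) (x : E) :
    ‖x - ⟪z, x⟫_𝕜 • z‖ ^ 2 = ‖x‖ ^ 2 - ‖⟪z, x⟫_𝕜‖ ^ 2 := by
  have h := congrArg RCLike.re (inner_sub_smul_sub_smul_of_norm_eq_one (𝕜 := 𝕜) hz x x)
  rw [← inner_conj_symm x z, RCLike.conj_mul, inner_self_eq_norm_sq,
    inner_self_eq_norm_sq_to_K] at h
  simpa using h

lemma norm_inner_sub_inner_mul_inner_le (hz : ‖z‖ = 1) (x y : E) :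
    ‖⟪x, y⟫_𝕜 - ⟪x, z⟫_𝕜 * ⟪z, y⟫_𝕜‖ ≤
      √(‖x‖ ^ 2 - ‖⟪x, z⟫_𝕜‖ ^ 2) * √(‖y‖ ^ 2 - ‖⟪z, y⟫_𝕜‖ ^ 2) := by
  rw [← inner_sub_smul_sub_smul_of_norm_eq_one hz, norm_inner_symm x z,
    ← norm_sub_smul_sq_of_norm_eq_one hz, ← norm_sub_smul_sq_of_norm_eq_one hz,
    Real.sqrt_sq (norm_nonneg _), Real.sqrt_sq (norm_nonneg _)]
  exact norm_inner_le_norm _ _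

theorem sqrt_one_sub_norm_inner_sq_le_add {x y : E} (hx : ‖x‖ = 1) (hy : ‖y‖ = 1)
    (hz : ‖z‖ = 1) :
    √(1 - ‖⟪x, y⟫_𝕜‖ ^ 2) ≤ √(1 - ‖⟪x, z⟫_𝕜‖ ^ 2) + √(1 - ‖⟪z, y⟫_𝕜‖ ^ 2) := by
  have hxz : ‖⟪x, z⟫_𝕜‖ ≤ 1 := by simpa [hx, hz] using norm_inner_le_norm (𝕜 := 𝕜) x z
  have hzy : ‖⟪z, y⟫_𝕜‖ ≤ 1 := by simpa [hz, hy] using norm_inner_le_norm (𝕜 := 𝕜) z y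
  refine sqrt_one_sub_sq_le_add_of_mul_sub_le (norm_nonneg _) hxz (norm_nonneg _) hzy ?_
  have hcs := norm_inner_sub_inner_mul_inner_le (𝕜 := 𝕜) hz x y
  rw [hx, hy, one_pow] at hcs
  calc ‖⟪x, z⟫_𝕜‖ * ‖⟪z, y⟫_𝕜‖ - √(1 - ‖⟪x, z⟫_𝕜‖ ^ 2) * √(1 - ‖⟪z, y⟫_𝕜‖ ^ 2)
      ≤ ‖⟪x, z⟫_𝕜 * ⟪z, y⟫_𝕜‖ - ‖⟪x, y⟫_𝕜 - ⟪x, z⟫_𝕜 * ⟪z, y⟫_𝕜‖ := by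
        rw [norm_mul]; linarith
    _ ≤ ‖⟪x, y⟫_𝕜‖ := by
        linarith [norm_sub_norm_le (⟪x, z⟫_𝕜 * ⟪z, y⟫_𝕜) ⟪x, y⟫_𝕜,
          norm_sub_rev (⟪x, z⟫_𝕜 * ⟪z, y⟫_𝕜) ⟪x, y⟫_𝕜]

end

lemma sum_star_mul_eq_inner {𝕜 ι : Type*} [RCLike 𝕜] [Fintype ι] (x y : ι → 𝕜) :
    ∑ i, star (x i) * y i = ⟪WithLp.toLp 2 x, WithLp.toLp 2 y⟫_𝕜 := by
  rw [EuclideanSpace.inner_toLp_toLp, dotProduct_comm]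
  rfl

/-- For unit vectors `x y z ∈ ℂⁿ` (with `x*x = y*y = z*z = 1`),
`√(1 − |x*y|²) ≤ √(1 − |x*z|²) + √(1 − |z*y|²)`, where `x*y = ∑ i, conj (x i) * y i`. -/
theorem sin_angle_triangle_complex (n : ℕ) (x y z : Fin n → ℂ)
    (hx : ∑ i, star (x i) * x i = 1)
    (hy : ∑ i, star (y i) * y i = 1)
    (hz : ∑ i, star (z i) * z i = 1) :
    Real.sqrt (1 - ‖∑ i, star (x i) * y i‖ ^ 2) ≤
      Real.sqrt (1 - ‖∑ i, star (x i) * z i‖ ^ 2) +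
      Real.sqrt (1 - ‖∑ i, star (z i) * y i‖ ^ 2) := by
  simp only [sum_star_mul_eq_inner] at hx hy hz ⊢
  exact sqrt_one_sub_norm_inner_sq_le_add (norm_eq_one_of_inner_self_eq_one hx)
    (norm_eq_one_of_inner_self_eq_one hy) (norm_eq_one_of_inner_self_eq_one hz)
end

section
/- Let u, z, w ∈ ℝⁿ be unit vectors (‖u‖₂ = ‖z‖₂ = ‖w‖₂ = 1), and let α, σ ∈ (0,1] with α ≤ σ. Set δ = √(1−α²) − √(1−σ²) (so δ ∈ [0,1]). If |uᵀz| ≥ σ and |wᵀz| ≥ √(1−δ²), then |wᵀu| ≥ α. -/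
/-!
The sines of the angles between unit vectors satisfy a triangle inequality,
`√(1 - ⟪x, z⟫²) ≤ √(1 - ⟪x, y⟫²) + √(1 - ⟪y, z⟫²)`, because `√(1 - ⟪x, z⟫²)` is the distance from
`x` to the line `ℝ z`. With `x = w`, `y = z`, `z = u` the hypotheses bound the right-hand side by
`√(1 - σ²) + δ = √(1 - α²)`, hence `α² ≤ ⟪w, u⟫²`.
-/

open scoped RealInnerProductSpace

noncomputable def dotR {n : ℕ} (u v : Fin n → ℝ) : ℝ := ∑ i, u i * v i

noncomputable def nrm {n : ℕ} (v : Fin n → ℝ) : ℝ := Real.sqrt (∑ i, v i ^ 2)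

theorem dotR_eq_inner {n : ℕ} (u v : Fin n → ℝ) :
    dotR u v = ⟪(WithLp.toLp 2 u : EuclideanSpace ℝ (Fin n)), WithLp.toLp 2 v⟫ := by
  simp [dotR, PiLp.inner_apply, mul_comm]

theorem nrm_eq_norm {n : ℕ} (v : Fin n → ℝ) :
    nrm v = ‖(WithLp.toLp 2 v : EuclideanSpace ℝ (Fin n))‖ := by
  simp [nrm, EuclideanSpace.norm_eq]

section UnitVectors

variable {E : Type*} [SeminormedAddCommGroup E] [InnerProductSpace ℝ E] {x y z : E}

theorem norm_sub_smul_sq_of_norm_eq_one_s3 (hx : ‖x‖ = 1) (hy : ‖y‖ = 1) (r : ℝ) :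
    ‖x - r • y‖ ^ 2 = (r - ⟪x, y⟫) ^ 2 + (1 - ⟪x, y⟫ ^ 2) := by
  rw [norm_sub_sq_real, inner_smul_right, norm_smul, hx, hy, Real.norm_eq_abs, mul_one, sq_abs]
  ring

theorem sqrt_one_sub_inner_sq_le_norm_sub_smul (hx : ‖x‖ = 1) (hy : ‖y‖ = 1) (r : ℝ) :
    √(1 - ⟪x, y⟫ ^ 2) ≤ ‖x - r • y‖ := by
  rw [Real.sqrt_le_left (norm_nonneg _), norm_sub_smul_sq_of_norm_eq_one_s3 hx hy]
  nlinarith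

theorem norm_sub_inner_smul_of_norm_eq_one (hx : ‖x‖ = 1) (hy : ‖y‖ = 1) :
    ‖x - ⟪x, y⟫ • y‖ = √(1 - ⟪x, y⟫ ^ 2) := by
  rw [← Real.sqrt_sq (norm_nonneg (x - ⟪x, y⟫ • y)), norm_sub_smul_sq_of_norm_eq_one_s3 hx hy,
    sub_self, sq, zero_mul, zero_add]

/-- The point `(⟪x, y⟫ * ⟪y, z⟫) • z` of the line `ℝ z`, reached by projecting `x` onto `ℝ y` and
then onto `ℝ z`, is within `√(1 - ⟪x, y⟫²) + √(1 - ⟪y, z⟫²)` of `x`. -/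
theorem sqrt_one_sub_inner_sq_le_add (hx : ‖x‖ = 1) (hy : ‖y‖ = 1) (hz : ‖z‖ = 1) :
    √(1 - ⟪x, z⟫ ^ 2) ≤ √(1 - ⟪x, y⟫ ^ 2) + √(1 - ⟪y, z⟫ ^ 2) := by
  set a := ⟪x, y⟫
  set b := ⟪y, z⟫
  have ha : |a| ≤ 1 := by simpa [hx, hy] using abs_real_inner_le_norm x y
  have hsplit : x - (a * b) • z = (x - a • y) + a • (y - b • z) := by module
  calc √(1 - ⟪x, z⟫ ^ 2) ≤ ‖x - (a * b) • z‖ := sqrt_one_sub_inner_sq_le_norm_sub_smul hx hz _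
    _ ≤ ‖x - a • y‖ + |a| * ‖y - b • z‖ := by
        rw [hsplit, ← Real.norm_eq_abs, ← norm_smul]
        exact norm_add_le _ _
    _ ≤ ‖x - a • y‖ + ‖y - b • z‖ := by
        gcongr
        exact mul_le_of_le_one_left (norm_nonneg _) ha
    _ = √(1 - a ^ 2) + √(1 - b ^ 2) := by
        rw [norm_sub_inner_smul_of_norm_eq_one hx hy, norm_sub_inner_smul_of_norm_eq_one hy hz]

end UnitVectors

theorem sqrt_one_sub_sq_le_sqrt_one_sub_sq {a b : ℝ} (ha : 0 ≤ a) (hab : a ≤ |b|) :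
    √(1 - b ^ 2) ≤ √(1 - a ^ 2) := by
  have : a ^ 2 ≤ b ^ 2 := by rw [← sq_abs b]; gcongr
  exact Real.sqrt_le_sqrt (by linarith)

theorem sqrt_one_sub_sq_le_of_sqrt_one_sub_sq_le_abs {d s : ℝ} (hd : 0 ≤ d)
    (hs : √(1 - d ^ 2) ≤ |s|) : √(1 - s ^ 2) ≤ d := by
  rw [Real.sqrt_le_left hd]
  have h := Real.sqrt_le_left (abs_nonneg s) |>.mp hs
  rw [sq_abs] at h
  linarith

theorem le_abs_of_sqrt_one_sub_sq_le {a c : ℝ} (ha : 0 ≤ a) (ha1 : a ≤ 1)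
    (h : √(1 - c ^ 2) ≤ √(1 - a ^ 2)) : a ≤ |c| := by
  have h' := (Real.sqrt_le_sqrt_iff (by nlinarith)).mp h
  simpa [abs_of_nonneg ha] using sq_le_sq.mp (show a ^ 2 ≤ c ^ 2 by linarith)

/-- For unit vectors `u z w ∈ ℝⁿ` and `0 < α ≤ σ ≤ 1`, with
`δ = √(1−α²) − √(1−σ²)`, if `|uᵀz| ≥ σ` and `|wᵀz| ≥ √(1−δ²)`, then `|wᵀu| ≥ α`. -/
theorem correlated_regressor (n : ℕ) (u z w : Fin n → ℝ)
    (hu : nrm u = 1) (hz : nrm z = 1) (hw : nrm w = 1)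
    (α σ : ℝ) (hα : 0 < α) (hσ : σ ≤ 1) (hασ : α ≤ σ)
    (huz : σ ≤ |dotR u z|)
    (hwz : Real.sqrt (1 - (Real.sqrt (1 - α ^ 2) - Real.sqrt (1 - σ ^ 2)) ^ 2)
            ≤ |dotR w z|) :
    α ≤ |dotR w u| := by
  rw [nrm_eq_norm] at hu hz hw
  rw [dotR_eq_inner] at huz hwz ⊢
  have hδ : 0 ≤ √(1 - α ^ 2) - √(1 - σ ^ 2) :=
    sub_nonneg.mpr (sqrt_one_sub_sq_le_sqrt_one_sub_sq hα.le (hασ.trans (le_abs_self σ)))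
  have hsin_uz := sqrt_one_sub_sq_le_sqrt_one_sub_sq (hα.le.trans hασ) huz
  have hsin_wz := sqrt_one_sub_sq_le_of_sqrt_one_sub_sq_le_abs hδ hwz
  have hsin_wu := sqrt_one_sub_inner_sq_le_add hw hz hu
  rw [real_inner_comm (WithLp.toLp 2 u) (WithLp.toLp 2 z)] at hsin_wu
  exact le_abs_of_sqrt_one_sub_sq_le hα.le (hασ.trans hσ) (by linarith)
end
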